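/- Let γ : [0,1] → ℝ² be C¹ at uniform ℓ¹-speed L, with modulus of continuity δ_k of γ̇ at scale 1/k. Fix k and suppose u = (u_1,…,u_{k-1}) ∈ Δ_{k-1} (so 0 < u_1 < ⋯ < u_{k-1} < 1, with u_0 = 0, u_k = 1) satisfies |u_j - j/k| > √(δ_k/L) + √(1/k) for some j. Then ∏_{i=1}^{k} (|Δ_{u_i} γ| / |Δ_i γ|) < (1 - δ_k/L - 1/k)^k < 1/e, where |Δ_{u_i} γ| is the ℓ¹ increment of γ over [u_{i-1}, u_i] and |Δ_i γ| the ℓ¹ increment over [(i-1)/k, i/k]. -/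

import Mathlib

/-!
Each factor of the product is at most `k (u_{i+1} - u_i) / (1 - δ/(2L))`. The numerator is at
most `L (u_{i+1} - u_i)` because the speed is `L`. On a grid cell of length `1/k` either both
coordinates of `γ̇` keep their sign, so the increment is exactly `L/k`, or one of them vanishes
somewhere; it then stays below `δ/2` on the whole cell while the other one keeps its sign, so the
increment is at least `(L - δ/2)/k`. Splitting the product at the deviating index `j` and applying
AM-GM to both blocks bounds `∏ k (u_{i+1} - u_i)` by `exp (-k KL(j/k ‖ u_j))`, and the deviation
`|u_j - j/k| > √(δ/L) + √(1/k)` forces `KL(j/k ‖ u_j) > -log ((1 - δ/L - 1/k) (1 - δ/(2L)))`.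
-/

open Set Real MeasureTheory intervalIntegral Finset

section Increments

variable {f f' : ℝ → ℝ} {a b : ℝ}

theorem integral_eq_sub_of_hasDerivAt_Icc (hab : a ≤ b)
    (hf : ∀ t ∈ Icc a b, HasDerivAt f (f' t) t) (hf' : ContinuousOn f' (Icc a b)) :
    ∫ t in a..b, f' t = f b - f a :=
  integral_eq_sub_of_hasDerivAt (by rwa [uIcc_of_le hab]) (hf'.intervalIntegrable_of_Icc hab)

theorem abs_sub_le_integral_abs_deriv (hab : a ≤ b)
    (hf : ∀ t ∈ Icc a b, HasDerivAt f (f' t) t) (hf' : ContinuousOn f' (Icc a b)) :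
    |f b - f a| ≤ ∫ t in a..b, |f' t| := by
  rw [← integral_eq_sub_of_hasDerivAt_Icc hab hf hf']
  exact abs_integral_le_integral_abs hab

theorem integral_abs_deriv_eq_abs_sub (hab : a < b)
    (hf : ∀ t ∈ Icc a b, HasDerivAt f (f' t) t) (hf' : ContinuousOn f' (Icc a b))
    (hne : ∀ t ∈ Ioo a b, f' t ≠ 0) :
    ∫ t in a..b, |f' t| = |f b - f a| := by
  have hIoo : Ioo a b ⊆ Icc a b := Ioo_subset_Icc_self
  have hclosure : Icc a b ⊆ closure (Ioo a b) := (closure_Ioo hab.ne).ge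
  -- A continuous function without zeros on an interval keeps one sign.
  have hsign : EqOn (fun t => |f' t|) f' (Ioo a b) ∨ EqOn (fun t => |f' t|) (-f') (Ioo a b) :=
    isPreconnected_Ioo.eq_or_eq_neg_of_sq_eq (hf'.mono hIoo).abs (hf'.mono hIoo)
      (fun t _ => sq_abs (f' t)) (hne _)
  rw [← integral_eq_sub_of_hasDerivAt_Icc hab.le hf hf',
    ← abs_of_nonneg (integral_nonneg hab.le fun t _ => abs_nonneg (f' t))]
  have huIcc : uIcc a b ⊆ Icc a b := (uIcc_of_le hab.le).subset
  rcases hsign with h | h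
  · rw [integral_congr ((h.of_subset_closure hf'.abs hf' hIoo hclosure).mono huIcc)]
  · rw [integral_congr ((h.of_subset_closure hf'.abs hf'.neg hIoo hclosure).mono huIcc),
      Pi.neg_def, intervalIntegral.integral_neg, abs_neg]

end Increments

structure HasL1SpeedOn (x y x' y' : ℝ → ℝ) (L : ℝ) (s : Set ℝ) : Prop where
  hasDerivAt_fst : ∀ t ∈ s, HasDerivAt x (x' t) t
  hasDerivAt_snd : ∀ t ∈ s, HasDerivAt y (y' t) t
  continuousOn_fst : ContinuousOn x' s
  continuousOn_snd : ContinuousOn y' s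
  speed : ∀ t ∈ s, |x' t| + |y' t| = L

namespace HasL1SpeedOn

variable {x y x' y' : ℝ → ℝ} {L δ a b : ℝ} {s t : Set ℝ}

theorem mono (hγ : HasL1SpeedOn x y x' y' L s) (hts : t ⊆ s) : HasL1SpeedOn x y x' y' L t :=
  ⟨fun r hr => hγ.hasDerivAt_fst r (hts hr), fun r hr => hγ.hasDerivAt_snd r (hts hr),
    hγ.continuousOn_fst.mono hts, hγ.continuousOn_snd.mono hts, fun r hr => hγ.speed r (hts hr)⟩

theorem swap (hγ : HasL1SpeedOn x y x' y' L s) : HasL1SpeedOn y x y' x' L s :=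
  ⟨hγ.hasDerivAt_snd, hγ.hasDerivAt_fst, hγ.continuousOn_snd, hγ.continuousOn_fst,
    fun r hr => (add_comm _ _).trans (hγ.speed r hr)⟩

theorem integral_abs_add_integral_abs (hγ : HasL1SpeedOn x y x' y' L (Icc a b)) (hab : a ≤ b) :
    (∫ t in a..b, |x' t|) + ∫ t in a..b, |y' t| = L * (b - a) := by
  rw [← integral_add (hγ.continuousOn_fst.intervalIntegrable_of_Icc hab).abs
      (hγ.continuousOn_snd.intervalIntegrable_of_Icc hab).abs,
    integral_congr fun t ht => hγ.speed t ((uIcc_of_le hab).subset ht),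
    intervalIntegral.integral_const, smul_eq_mul, mul_comm]

theorem ell1_increment_le (hγ : HasL1SpeedOn x y x' y' L (Icc a b)) (hab : a ≤ b) :
    |x b - x a| + |y b - y a| ≤ L * (b - a) := by
  rw [← hγ.integral_abs_add_integral_abs hab]
  exact add_le_add (abs_sub_le_integral_abs_deriv hab hγ.hasDerivAt_fst hγ.continuousOn_fst)
    (abs_sub_le_integral_abs_deriv hab hγ.hasDerivAt_snd hγ.continuousOn_snd)

theorem ell1_increment_ge_of_eq_zero (hγ : HasL1SpeedOn x y x' y' L (Icc a b))
    (hδ : δ < 2 * L) (hab : a < b)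
    (hosc : ∀ s ∈ Icc a b, ∀ t ∈ Icc a b, |s - t| < b - a → |x' s - x' t| + |y' s - y' t| ≤ δ)
    {t₀ : ℝ} (ht₀ : t₀ ∈ Ioo a b) (hx₀ : x' t₀ = 0) :
    (L - δ / 2) * (b - a) ≤ |x b - x a| + |y b - y a| := by
  have ht₀' : t₀ ∈ Icc a b := Ioo_subset_Icc_self ht₀
  -- Away from a zero of `x'` the speed constraint moves `|y'|` by exactly `|x'|`.
  have hsmall : ∀ t ∈ Icc a b, |x' t| ≤ δ / 2 := by
    intro t ht
    have hosc_t := hosc t ht t₀ ht₀'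
      (abs_sub_lt_iff.2 ⟨by linarith [ht.2, ht₀.1], by linarith [ht.1, ht₀.2]⟩)
    have hspeed_t := hγ.speed t ht
    have hspeed₀ := hγ.speed t₀ ht₀'
    rw [hx₀, sub_zero] at hosc_t
    rw [hx₀, abs_zero, zero_add] at hspeed₀
    have := abs_sub_abs_le_abs_sub (y' t₀) (y' t)
    rw [abs_sub_comm (y' t₀)] at this
    linarith
  have hyne : ∀ t ∈ Ioo a b, y' t ≠ 0 := by
    intro t ht hyt
    have hspeed_t := hγ.speed t (Ioo_subset_Icc_self ht)
    have := hsmall t (Ioo_subset_Icc_self ht)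
    rw [hyt, abs_zero, add_zero] at hspeed_t
    linarith
  have hxint : ∫ t in a..b, |x' t| ≤ δ / 2 * (b - a) := by
    calc ∫ t in a..b, |x' t| ≤ ∫ _ in a..b, δ / 2 :=
          integral_mono_on hab.le (hγ.continuousOn_fst.intervalIntegrable_of_Icc hab.le).abs
            intervalIntegrable_const hsmall
      _ = δ / 2 * (b - a) := by rw [intervalIntegral.integral_const, smul_eq_mul, mul_comm]
  have htotal := hγ.integral_abs_add_integral_abs hab.le
  rw [integral_abs_deriv_eq_abs_sub hab hγ.hasDerivAt_snd hγ.continuousOn_snd hyne] at htotal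
  linarith [abs_nonneg (x b - x a)]

theorem ell1_increment_ge (hγ : HasL1SpeedOn x y x' y' L (Icc a b))
    (hδ₀ : 0 ≤ δ) (hδ : δ < 2 * L) (hab : a < b)
    (hosc : ∀ s ∈ Icc a b, ∀ t ∈ Icc a b, |s - t| < b - a → |x' s - x' t| + |y' s - y' t| ≤ δ) :
    (L - δ / 2) * (b - a) ≤ |x b - x a| + |y b - y a| := by
  by_cases hX : ∃ t₀ ∈ Ioo a b, x' t₀ = 0
  · obtain ⟨t₀, ht₀, hx₀⟩ := hX
    exact hγ.ell1_increment_ge_of_eq_zero hδ hab hosc ht₀ hx₀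
  by_cases hY : ∃ t₀ ∈ Ioo a b, y' t₀ = 0
  · obtain ⟨t₀, ht₀, hy₀⟩ := hY
    rw [add_comm]
    refine hγ.swap.ell1_increment_ge_of_eq_zero hδ hab (fun s hs t ht hst => ?_) ht₀ hy₀
    rw [add_comm]
    exact hosc s hs t ht hst
  push Not at hX hY
  rw [← integral_abs_deriv_eq_abs_sub hab hγ.hasDerivAt_fst hγ.continuousOn_fst hX,
    ← integral_abs_deriv_eq_abs_sub hab hγ.hasDerivAt_snd hγ.continuousOn_snd hY,
    hγ.integral_abs_add_integral_abs hab.le]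
  exact mul_le_mul_of_nonneg_right (by linarith) (by linarith)

theorem ell1_increment_div_grid_le (hγ : HasL1SpeedOn x y x' y' L (Icc 0 1)) (hL : 0 < L)
    (hδ₀ : 0 ≤ δ) (hδ : δ < 2 * L) {k : ℕ}
    (hosc : ∀ s ∈ Icc (0:ℝ) 1, ∀ t ∈ Icc (0:ℝ) 1,
      |s - t| < 1 / k → |x' s - x' t| + |y' s - y' t| ≤ δ)
    {i : ℕ} (hi : i < k) {a b : ℝ} (ha : 0 ≤ a) (hab : a ≤ b) (hb : b ≤ 1) :
    (|x b - x a| + |y b - y a|) /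
        (|x (((i:ℝ) + 1) / k) - x ((i:ℝ) / k)| + |y (((i:ℝ) + 1) / k) - y ((i:ℝ) / k)|)
      ≤ k * (b - a) / (1 - δ / L / 2) := by
  have hk : (0:ℝ) < k := by exact_mod_cast (Nat.zero_le i).trans_lt hi
  have hik : (i:ℝ) + 1 ≤ k := by exact_mod_cast hi
  have hcell₀ : (0:ℝ) ≤ i / k := by positivity
  have hcell₁ : ((i:ℝ) + 1) / k ≤ 1 := (div_le_one hk).2 hik
  have hlen : ((i:ℝ) + 1) / k - i / k = 1 / k := by ring
  have hden := (hγ.mono (Icc_subset_Icc hcell₀ hcell₁)).ell1_increment_ge hδ₀ hδ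
    (by rw [← sub_pos, hlen]; positivity)
    fun s hs t ht hst => hosc s (Icc_subset_Icc hcell₀ hcell₁ hs) t
      (Icc_subset_Icc hcell₀ hcell₁ ht) (hlen ▸ hst)
  rw [hlen] at hden
  have hnum := (hγ.mono (Icc_subset_Icc ha hb)).ell1_increment_le hab
  have hhalf : 0 < L - δ / 2 := by linarith
  calc _ ≤ L * (b - a) / ((L - δ / 2) * (1 / k)) :=
        div_le_div₀ (by nlinarith) hnum (by positivity) hden
    _ = k * (b - a) / (1 - δ / L / 2) := by field_simp

end HasL1SpeedOn

theorem log_le_sub_inv_div_two {t : ℝ} (ht : 1 ≤ t) : log t ≤ (t - t⁻¹) / 2 := by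
  rw [← sinh_log (by linarith)]
  exact self_le_sinh_iff.2 (log_nonneg ht)

theorem neg_log_one_sub_le {d : ℝ} (hd₀ : 0 ≤ d) (hd₁ : d < 1) :
    -log (1 - d) ≤ (d + d / (1 - d)) / 2 := by
  have hpos : 0 < 1 - d := by linarith
  rw [← log_inv]
  refine (log_le_sub_inv_div_two (one_le_inv_iff₀.2 ⟨hpos, by linarith⟩)).trans_eq ?_
  field_simp
  ring

theorem mul_one_sub_le_log {d : ℝ} (hd₀ : 0 ≤ d) (hd₁ : d ≤ 1) :
    d * (1 - d) ≤ log ((1 + d) * (1 - d ^ 2 / 2)) := by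
  set z := d * (1 - d)
  have hz₀ : 0 ≤ z := mul_nonneg hd₀ (by linarith)
  have hzd : z ≤ d := by nlinarith
  have hexp : exp z ≤ 1 + z + z ^ 2 / 2 + 2 / 9 * z ^ 3 := by
    convert exp_bound' hz₀ (by nlinarith) (n := 3) (by norm_num) using 1
    norm_num [Finset.sum_range_succ, Nat.factorial]
    ring
  -- `(1 + d) (1 - d²/2) = 1 + z + z d / 2`, which dominates the cubic Taylor bound of `exp z`.
  rw [le_log_iff_exp_le (by nlinarith)]
  nlinarith [mul_le_mul_of_nonneg_left hzd hz₀, mul_nonneg hz₀ hz₀,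
    mul_nonneg (mul_nonneg hz₀ hz₀) hd₀]

noncomputable def binaryKL (α v : ℝ) : ℝ := α * log (α / v) + (1 - α) * log ((1 - α) / (1 - v))

theorem binaryKL_one_sub (α v : ℝ) : binaryKL (1 - α) (1 - v) = binaryKL α v := by
  simp only [binaryKL, sub_sub_cancel]
  ring

theorem neg_log_one_sub_sub_le_binaryKL_add {α d : ℝ} (hα : 0 < α) (hd : 0 < d) (h1 : α + d < 1) :
    -log (1 - d) - d * (1 - d) ≤ binaryKL α (α + d) := by
  have h1d : 0 < 1 - d := by linarith
  have h1α : 0 < 1 - α := by linarith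
  have h1αd : 0 < 1 - α - d := by linarith
  have h1αd' : 1 - (α + d) = 1 - α - d := by ring
  -- Tangent-line bounds for `log` at the two terms; the leftover `α`-term is handled by `hslope`.
  have hupper := log_le_sub_one_of_pos (show 0 < (α + d) * (1 - d) / α by positivity)
  have hlower := one_sub_inv_le_log_of_pos (show 0 < (1 - α) * (1 - d) / (1 - α - d) by positivity)
  rw [log_div (by positivity) hα.ne', log_mul (by positivity) h1d.ne'] at hupper
  rw [log_div (by positivity) h1αd.ne', log_mul h1α.ne' h1d.ne', inv_div] at hlower
  have hslope := neg_log_one_sub_le hd.le (by linarith)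
  simp only [binaryKL, h1αd', log_div hα.ne' (by positivity : α + d ≠ 0),
    log_div h1α.ne' h1αd.ne']
  have e1 : α * ((α + d) * (1 - d) / α - 1) = d - α * d - d ^ 2 := by field_simp; ring
  have e2 : (1 - α) * (1 - (1 - α - d) / ((1 - α) * (1 - d))) = α * d / (1 - d) := by
    field_simp; ring
  have e3 : α * ((d + d / (1 - d)) / 2) = (α * d + α * d / (1 - d)) / 2 := by ring
  linarith [mul_le_mul_of_nonneg_left hupper hα.le, mul_le_mul_of_nonneg_left hlower h1α.le,
    mul_le_mul_of_nonneg_left hslope hα.le]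

theorem neg_log_lt_binaryKL_add {α d p q : ℝ} (hα : 0 < α) (hd : 0 < d) (h1 : α + d < 1)
    (hq : 0 ≤ q) (hpq : p + q < d ^ 2) :
    -log ((1 - p - q) * (1 - p / 2)) < binaryKL α (α + d) := by
  have hd1 : d < 1 := by linarith
  have hd2 : d ^ 2 < 1 := by nlinarith
  calc -log ((1 - p - q) * (1 - p / 2)) < -log ((1 - d ^ 2) * (1 - d ^ 2 / 2)) := by
        refine neg_lt_neg (log_lt_log (by nlinarith) ?_)
        exact mul_lt_mul (by linarith) (by linarith) (by linarith) (by linarith)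
    _ = -log (1 - d) - log ((1 + d) * (1 - d ^ 2 / 2)) := by
        rw [show (1 - d ^ 2) * (1 - d ^ 2 / 2) = (1 - d) * ((1 + d) * (1 - d ^ 2 / 2)) by ring,
          log_mul (by linarith) (by nlinarith)]
        ring
    _ ≤ -log (1 - d) - d * (1 - d) := by linarith [mul_one_sub_le_log hd.le hd1.le]
    _ ≤ binaryKL α (α + d) := neg_log_one_sub_sub_le_binaryKL_add hα hd h1

theorem neg_log_lt_binaryKL {α v p q : ℝ} (hα₀ : 0 < α) (hα₁ : α < 1) (hv₀ : 0 < v) (hv₁ : v < 1)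
    (hp : 0 ≤ p) (hq : 0 ≤ q) (hpq : p + q < (v - α) ^ 2) :
    -log ((1 - p - q) * (1 - p / 2)) < binaryKL α v := by
  have hvα : v ≠ α := by
    rintro rfl
    rw [sub_self, zero_pow two_ne_zero] at hpq
    linarith
  rcases hvα.lt_or_gt with hlt | hgt
  · rw [← binaryKL_one_sub, show 1 - v = 1 - α + (α - v) by ring]
    exact neg_log_lt_binaryKL_add (by linarith) (by linarith) (by linarith) hq
      (by linarith [show (v - α) ^ 2 = (α - v) ^ 2 by ring])
  · rw [show v = α + (v - α) by ring]
    exact neg_log_lt_binaryKL_add hα₀ (by linarith) (by linarith) hq hpq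

theorem add_lt_sq_of_sqrt_add_sqrt_lt_abs {p q d : ℝ} (hp : 0 ≤ p) (hq : 0 ≤ q)
    (h : √p + √q < |d|) : p + q < d ^ 2 := by
  have hsq := pow_lt_pow_left₀ h (by positivity) two_ne_zero
  rw [sq_abs, add_sq, sq_sqrt hp, sq_sqrt hq] at hsq
  nlinarith [mul_nonneg (sqrt_nonneg p) (sqrt_nonneg q)]

theorem prod_le_sum_div_card_pow {ι : Type*} (s : Finset ι) {f : ι → ℝ} (hf : ∀ i ∈ s, 0 ≤ f i) :
    ∏ i ∈ s, f i ≤ ((∑ i ∈ s, f i) / #s) ^ #s := by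
  rcases s.eq_empty_or_nonempty with rfl | hs
  · simp
  have hcard : (0 : ℝ) < #s := by exact_mod_cast hs.card_pos
  have hamgm := geom_mean_le_arith_mean s (fun _ => 1) f (fun _ _ => zero_le_one)
    (by simpa using hcard) hf
  simp only [rpow_one, sum_const, nsmul_eq_mul, mul_one, one_mul] at hamgm
  rwa [rpow_inv_le_iff_of_pos (prod_nonneg hf) (div_nonneg (sum_nonneg hf) hcard.le) hcard,
    rpow_natCast] at hamgm

/-- The AM-GM bound for `∏ c f i`, written as an exponential so that two blocks combine into a
binary relative entropy. -/
theorem prod_const_mul_le_exp {ι : Type*} (s : Finset ι) {f : ι → ℝ} {c β : ℝ} (hc : 0 < c)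
    (hβ : (#s : ℝ) = c * β) (hs : s.Nonempty) (hf : ∀ i ∈ s, 0 < f i) :
    ∏ i ∈ s, c * f i ≤ exp (-(c * (β * log (β / ∑ i ∈ s, f i)))) := by
  have hσ : 0 < ∑ i ∈ s, f i := sum_pos hf hs
  have hβ₀ : 0 < β := by
    have : (0 : ℝ) < #s := by exact_mod_cast hs.card_pos
    rw [hβ] at this
    exact pos_of_mul_pos_right this hc.le
  calc ∏ i ∈ s, c * f i = c ^ #s * ∏ i ∈ s, f i := by rw [prod_mul_distrib, prod_const]
    _ ≤ c ^ #s * ((∑ i ∈ s, f i) / #s) ^ #s := by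
        gcongr
        exact prod_le_sum_div_card_pow s fun i hi => (hf i hi).le
    _ = ((∑ i ∈ s, f i) / β) ^ #s := by
        rw [← mul_pow, hβ]
        field_simp
    _ = exp (-(c * (β * log (β / ∑ i ∈ s, f i)))) := by
        rw [← exp_log (div_pos hσ hβ₀), ← exp_nat_mul, hβ, log_div hσ.ne' hβ₀.ne',
          log_div hβ₀.ne' hσ.ne']
        ring_nf

theorem prod_mul_sub_le_exp_neg_binaryKL {u : ℕ → ℝ} {j k : ℕ} (hu₀ : u 0 = 0) (hu₁ : u k = 1)
    (hu : ∀ i < k, u i < u (i + 1)) (hj₀ : 0 < j) (hjk : j < k) :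
    ∏ i ∈ range k, (k * (u (i + 1) - u i)) ≤ exp (-(k * binaryKL (j / k) (u j))) := by
  have hk : (0 : ℝ) < k := by exact_mod_cast hj₀.trans hjk
  have hleft := prod_const_mul_le_exp (range j) (f := fun i => u (i + 1) - u i) (β := j / k) hk
    (by rw [card_range]; field_simp) (nonempty_range_iff.2 hj₀.ne')
    fun i hi => sub_pos.2 (hu i ((mem_range.1 hi).trans hjk))
  have hright :=
    prod_const_mul_le_exp (Ico j k) (f := fun i => u (i + 1) - u i) (β := 1 - j / k) hk
    (by rw [Nat.card_Ico, Nat.cast_sub hjk.le]; field_simp) (nonempty_Ico.2 hjk)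
    fun i hi => sub_pos.2 (hu i (mem_Ico.1 hi).2)
  rw [sum_range_sub, hu₀, sub_zero] at hleft
  rw [sum_Ico_sub _ hjk.le, hu₁] at hright
  rw [← prod_range_mul_prod_Ico _ hjk.le, binaryKL, show -(k * (j / k * log (j / k / u j) +
    (1 - j / k) * log ((1 - j / k) / (1 - u j)))) = -(k * (j / k * log (j / k / u j))) +
    -(k * ((1 - j / k) * log ((1 - j / k) / (1 - u j)))) by ring, exp_add]
  exact mul_le_mul hleft hright (prod_nonneg fun i hi => (mul_pos hk (sub_pos.2
    (hu i (mem_Ico.1 hi).2))).le) (exp_pos _).le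

theorem one_sub_sub_pow_lt_exp_neg_one {a : ℝ} {k : ℕ} (hk : k ≠ 0) (ha : 0 ≤ a)
    (h : 0 ≤ 1 - a - 1 / k) : (1 - a - 1 / k) ^ k < exp (-1) := by
  have hk' : (0 : ℝ) < k := by positivity
  calc (1 - a - 1 / k) ^ k < exp (-(a + 1 / k)) ^ k := by
        gcongr
        simpa only [sub_sub] using one_sub_lt_exp_neg (by positivity : a + 1 / k ≠ 0)
    _ = exp (-(k * a) - 1) := by
        rw [← exp_nat_mul]
        field_simp
        ring_nf
    _ ≤ exp (-1) := exp_le_exp.2 (by nlinarith)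

theorem exp_neg_mul_lt_pow {c K : ℝ} {k : ℕ} (hc : 0 < c) (hk : (0:ℝ) < k) (h : -log c < K) :
    exp (-(k * K)) < c ^ k := by
  rw [← exp_log hc, ← exp_nat_mul]
  exact exp_lt_exp.2 (by nlinarith)

theorem stmt5_general (x y x' y' : ℝ → ℝ) (L : ℝ) (hL : 0 < L)
    (hx : ∀ t ∈ Icc (0:ℝ) 1, HasDerivAt x (x' t) t)
    (hy : ∀ t ∈ Icc (0:ℝ) 1, HasDerivAt y (y' t) t)
    (hcx : ContinuousOn x' (Icc 0 1)) (hcy : ContinuousOn y' (Icc 0 1))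
    (hspeed : ∀ t ∈ Icc (0:ℝ) 1, |x' t| + |y' t| = L)
    (k : ℕ) (δ : ℝ)
    (hmod : ∀ s ∈ Icc (0:ℝ) 1, ∀ t ∈ Icc (0:ℝ) 1,
      |s - t| < 1 / k → |x' s - x' t| + |y' s - y' t| ≤ δ)
    (hδL : δ / L + 1 / k < 1)
    (u : ℕ → ℝ) (hu0 : u 0 = 0) (huk : u k = 1)
    (hmono : ∀ i < k, u i < u (i + 1))
    (hdev : ∃ j : ℕ, 1 ≤ j ∧ j ≤ k - 1 ∧
      Real.sqrt (δ / L) + Real.sqrt (1 / k) < |u j - (j:ℝ)/k|) :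
    (∏ i ∈ Finset.range k,
        ((|x (u (i + 1)) - x (u i)| + |y (u (i + 1)) - y (u i)|) /
          (|x (((i:ℝ)+1)/k) - x ((i:ℝ)/k)| + |y (((i:ℝ)+1)/k) - y ((i:ℝ)/k)|)))
      < (1 - δ / L - 1 / k) ^ k ∧
    (1 - δ / L - 1 / k) ^ k < 1 / Real.exp 1 := by
  obtain ⟨j, hj, hjk', hdev⟩ := hdev
  have hjk : j < k := by omega
  have hk : (0:ℝ) < k := by exact_mod_cast (Nat.zero_le j).trans_lt hjk
  have hδ₀ : 0 ≤ δ := by simpa using hmod 0 (by simp) 0 (by simp) (by simpa using hk)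
  have hp : 0 ≤ δ / L := div_nonneg hδ₀ hL.le
  have hq : (0:ℝ) < 1 / k := by positivity
  have hδ : δ < L := by rw [← div_lt_one hL]; linarith
  have hγ : HasL1SpeedOn x y x' y' L (Icc 0 1) := ⟨hx, hy, hcx, hcy, hspeed⟩
  have hu : StrictMonoOn u (Set.Iic k) := strictMonoOn_Iic_of_lt_succ hmono
  have hu_mem : ∀ i ≤ k, u i ∈ Icc (0:ℝ) 1 := fun i hi =>
    ⟨hu0 ▸ hu.monotoneOn (Nat.zero_le k) hi (Nat.zero_le i),
      huk ▸ hu.monotoneOn hi Set.self_mem_Iic hi⟩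
  have hKL : -log ((1 - δ / L - 1 / k) * (1 - δ / L / 2)) < binaryKL (j / k) (u j) :=
    neg_log_lt_binaryKL (by positivity) ((div_lt_one hk).2 (by exact_mod_cast hjk))
      (hu0 ▸ hu (Nat.zero_le k) hjk.le hj) (huk ▸ hu hjk.le Set.self_mem_Iic hjk) hp hq.le
      (add_lt_sq_of_sqrt_add_sqrt_lt_abs hp hq.le hdev)
  have hD : 0 < 1 - δ / L / 2 := by linarith
  have hβ : 0 < 1 - δ / L - 1 / k := by linarith
  refine ⟨?_, by simpa [exp_neg] using one_sub_sub_pow_lt_exp_neg_one (by omega) hp hβ.le⟩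
  calc _ ≤ ∏ i ∈ range k, k * (u (i + 1) - u i) / (1 - δ / L / 2) :=
        prod_le_prod (fun i _ => div_nonneg (by positivity) (by positivity)) fun i hi =>
          hγ.ell1_increment_div_grid_le hL hδ₀ (by linarith) hmod (mem_range.1 hi)
            (hu_mem i (mem_range.1 hi).le).1 (hmono i (mem_range.1 hi)).le
            (hu_mem (i + 1) (mem_range.1 hi)).2
    _ = (∏ i ∈ range k, k * (u (i + 1) - u i)) / (1 - δ / L / 2) ^ k := by
        rw [prod_div_distrib, prod_const, card_range]
    _ ≤ exp (-(k * binaryKL (j / k) (u j))) / (1 - δ / L / 2) ^ k := by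
        gcongr
        exact prod_mul_sub_le_exp_neg_binaryKL hu0 huk hmono hj hjk
    _ < ((1 - δ / L - 1 / k) * (1 - δ / L / 2)) ^ k / (1 - δ / L / 2) ^ k := by
        gcongr
        exact exp_neg_mul_lt_pow (mul_pos hβ hD) hk hKL
    _ = (1 - δ / L - 1 / k) ^ k := by rw [mul_pow, mul_div_cancel_right₀ _ (pow_ne_zero _ hD.ne')]

theorem stmt5 (x y x' y' : ℝ → ℝ) (L : ℝ) (hL : 0 < L)
    (hx : ∀ t ∈ Icc (0:ℝ) 1, HasDerivAt x (x' t) t)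
    (hy : ∀ t ∈ Icc (0:ℝ) 1, HasDerivAt y (y' t) t)
    (hcx : ContinuousOn x' (Icc 0 1)) (hcy : ContinuousOn y' (Icc 0 1))
    (hspeed : ∀ t ∈ Icc (0:ℝ) 1, |x' t| + |y' t| = L)
    (k : ℕ) (hk : 2 ≤ k) (δ : ℝ)
    (hmod : ∀ s ∈ Icc (0:ℝ) 1, ∀ t ∈ Icc (0:ℝ) 1,
      |s - t| < 1 / k → |x' s - x' t| + |y' s - y' t| ≤ δ)
    (hδL : δ / L + 1 / k < 1)
    (hinc : ∀ i : ℕ, 1 ≤ i → i ≤ k →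
      (L - δ) / k ≤ |x ((i:ℝ)/k) - x (((i:ℝ)-1)/k)| + |y ((i:ℝ)/k) - y (((i:ℝ)-1)/k)|)
    (u : ℕ → ℝ) (hu0 : u 0 = 0) (huk : u k = 1)
    (hmono : ∀ i < k, u i < u (i + 1))
    (hdev : ∃ j : ℕ, 1 ≤ j ∧ j ≤ k - 1 ∧
      Real.sqrt (δ / L) + Real.sqrt (1 / k) < |u j - (j:ℝ)/k|) :
    (∏ i ∈ Finset.range k,
        ((|x (u (i + 1)) - x (u i)| + |y (u (i + 1)) - y (u i)|) /
          (|x (((i:ℝ)+1)/k) - x ((i:ℝ)/k)| + |y (((i:ℝ)+1)/k) - y ((i:ℝ)/k)|)))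
      < (1 - δ / L - 1 / k) ^ k ∧
    (1 - δ / L - 1 / k) ^ k < 1 / Real.exp 1 :=
  stmt5_general x y x' y' L hL hx hy hcx hcy hspeed k δ hmod hδL u hu0 huk hmono hdev
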